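/- Let x*(β) denote the unique solution in (0, 1/2) of (a+b)·x + c + d = T_β(x). Then x*(β) is strictly decreasing in β for β > 0, and x*(β) → 0 as β → ∞. -/

import Mathlib

set_option autoImplicit false

open Real Set Filter Topology

/-!
Write `f x = (a + b) x + c + d = (δ_PS1 - δ_TR1) x - δ_PS1`, which is negative on `(0, 1)`.
Since `T_β → -∞` at `0⁺`, whenever `f t < T_β t` the intermediate value theorem produces a root
of `f = T_β` in `(0, t)`, which by uniqueness is `x*(β)`; hence `x*(β) < t`.
For `β₁ < β₂`, the point `t = x*(β₁) < 1/2` has negative logit, so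
`f t = β₁⁻¹ logit t < β₂⁻¹ logit t`, giving `x*(β₂) < x*(β₁)`.
For fixed `ε`, `β⁻¹ logit ε → 0 > f ε`, so eventually `x*(β) < ε`.
-/

noncomputable def logit (x : ℝ) : ℝ := log (x / (1 - x))

lemma continuousOn_logit : ContinuousOn logit (Ioo 0 1) := by
  refine ContinuousOn.log (continuousOn_id.div (by fun_prop) ?_) ?_
  · exact fun x hx => (sub_pos.2 hx.2).ne'
  · exact fun x hx => (div_pos hx.1 (sub_pos.2 hx.2)).ne'

lemma tendsto_logit_nhdsGT_zero : Tendsto logit (𝓝[>] 0) atBot := by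
  have hcont : Tendsto (fun x : ℝ => x / (1 - x)) (𝓝[>] 0) (𝓝 0) := by
    have : ContinuousAt (fun x : ℝ => x / (1 - x)) 0 :=
      continuousAt_id.div (by fun_prop) (by norm_num)
    simpa using this.tendsto.mono_left nhdsWithin_le_nhds
  have hpos : ∀ᶠ x in 𝓝[>] (0 : ℝ), x / (1 - x) ∈ Ioi 0 := by
    filter_upwards [Ioo_mem_nhdsGT zero_lt_one] with x hx
    exact div_pos hx.1 (sub_pos.2 hx.2)
  exact tendsto_log_nhdsGT_zero.comp
    (tendsto_nhdsWithin_of_tendsto_nhds_of_eventually_within _ hcont hpos)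

lemma logit_neg {x : ℝ} (h0 : 0 < x) (h : x < 1 / 2) : logit x < 0 :=
  log_neg (div_pos h0 (by linarith)) ((div_lt_one (by linarith)).2 (by linarith))

lemma exists_mem_Ioo_eq_of_tendsto_atTop_nhdsGT {α δ : Type*} [ConditionallyCompleteLinearOrder α]
    [TopologicalSpace α] [OrderTopology α] [DenselyOrdered α] [LinearOrder δ] [TopologicalSpace δ]
    [OrderClosedTopology δ] {g : α → δ} {a t : α} {v : δ} (hat : a < t)
    (hg : ContinuousOn g (Ioc a t)) (hlim : Tendsto g (𝓝[>] a) atTop) (ht : g t < v) :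
    ∃ y ∈ Ioo a t, g y = v := by
  have := left_nhdsWithin_Ioc_neBot hat
  obtain ⟨y, hy, hgy⟩ := isPreconnected_Ioc.intermediate_value_Ici (l := 𝓝[Ioc a t] a)
    (right_mem_Ioc.2 hat) inf_le_right hg
    (hlim.mono_left (nhdsWithin_mono _ Ioc_subset_Ioi_self)) ht.le
  exact ⟨y, ⟨hy.1, hy.2.lt_of_ne (by rintro rfl; exact ht.ne hgy)⟩, hgy⟩

lemma lt_of_lt_inv_mul_logit {f : ℝ → ℝ} {β x t : ℝ} (hf : Continuous f) (hβ : 0 < β)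
    (huniq : ∀ y ∈ Ioo (0 : ℝ) 1, f y = β⁻¹ * logit y → y = x)
    (ht : t ∈ Ioo (0 : ℝ) 1) (hlt : f t < β⁻¹ * logit t) : x < t := by
  set g : ℝ → ℝ := fun y => f y + -(β⁻¹ * logit y)
  have hcont : ContinuousOn g (Ioc 0 t) :=
    hf.continuousOn.add (continuousOn_const.mul
      (continuousOn_logit.mono fun y hy => ⟨hy.1, hy.2.trans_lt ht.2⟩)).neg
  have hlim : Tendsto g (𝓝[>] 0) atTop :=
    (hf.tendsto 0).mono_left nhdsWithin_le_nhds |>.add_atTop (tendsto_neg_atBot_atTop.comp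
      (tendsto_logit_nhdsGT_zero.const_mul_atBot (inv_pos.2 hβ)))
  obtain ⟨y, hy, hgy⟩ := exists_mem_Ioo_eq_of_tendsto_atTop_nhdsGT ht.1 hcont hlim
    (show g t < 0 by simp only [g]; linarith)
  have hyx : y = x := huniq y ⟨hy.1, hy.2.trans ht.2⟩ (by simp only [g] at hgy; linarith)
  exact hyx ▸ hy.2

theorem prosperity_fixed_point_monotone_general
    (δTR1 δPS1 δRT0 δSP0 : ℝ)
    (hTR1 : 0 < δTR1) (hPS1 : 0 < δPS1)
    (a b c d : ℝ)
    (ha : a = δSP0 - δRT0 + δPS1 - δTR1) (hb : b = δRT0 - δSP0)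
    (hc : c = -(δPS1 + δSP0)) (hd : d = δSP0)
    (T : ℝ → ℝ → ℝ) (hT : ∀ β x, T β x = β⁻¹ * Real.log (x / (1 - x)))
    (xstar : ℝ → ℝ)
    (hxstar : ∀ β : ℝ, 0 < β →
      xstar β ∈ Ioo (0:ℝ) (1/2) ∧ (a + b) * xstar β + c + d = T β (xstar β) ∧
      ∀ y ∈ Ioo (0:ℝ) 1, (a + b) * y + c + d = T β y → y = xstar β) :
    StrictAntiOn xstar (Ioi (0:ℝ)) ∧ Tendsto xstar atTop (nhds 0) := by
  simp only [hT] at hxstar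
  have hneg : ∀ x ∈ Ioo (0 : ℝ) 1, (a + b) * x + c + d < 0 := by
    rintro x ⟨hx0, hx1⟩
    subst ha hb hc hd
    nlinarith [mul_pos hPS1 (sub_pos.2 hx1), mul_pos hTR1 hx0]
  have below : ∀ β, 0 < β → ∀ t ∈ Ioo (0 : ℝ) 1,
      (a + b) * t + c + d < β⁻¹ * logit t → xstar β < t :=
    fun β hβ _ ht hlt =>
      lt_of_lt_inv_mul_logit (f := fun y => (a + b) * y + c + d) (by fun_prop) hβ
        (hxstar β hβ).2.2 ht hlt
  refine ⟨fun β₁ hβ₁ β₂ hβ₂ hβ₁₂ => ?_, tendsto_order.2 ⟨fun l hl => ?_, fun u hu => ?_⟩⟩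
  · obtain ⟨⟨hx0, hxhalf⟩, hxeq, -⟩ := hxstar β₁ hβ₁
    refine below β₂ hβ₂ _ ⟨hx0, by linarith⟩ ?_
    rw [hxeq]
    exact mul_lt_mul_of_neg_right (inv_strictAnti₀ hβ₁ hβ₁₂) (logit_neg hx0 hxhalf)
  · filter_upwards [eventually_gt_atTop 0] with β hβ using hl.trans (hxstar β hβ).1.1
  · obtain ⟨ε, hε, hεu⟩ : ∃ ε ∈ Ioo (0 : ℝ) 1, ε ≤ u :=
      ⟨min u (1 / 2), ⟨lt_min hu one_half_pos, by linarith [min_le_right u (1 / 2)]⟩,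
        min_le_left _ _⟩
    have hvanish : Tendsto (fun β : ℝ => β⁻¹ * logit ε) atTop (𝓝 0) := by
      simpa using tendsto_inv_atTop_zero.mul_const (logit ε)
    filter_upwards [hvanish.eventually (eventually_gt_nhds (hneg ε hε)),
      eventually_gt_atTop 0] with β hlt hβ
    exact (below β hβ ε hε hlt).trans_le hεu

/-- The unique solution x*(β) ∈ (0,1/2) of
(a+b)·x + c + d = T_β(x) is strictly decreasing in β on (0,∞), and
x*(β) → 0 as β → ∞. -/
theorem prosperity_fixed_point_monotone
    (δTR1 δPS1 δRT0 δSP0 : ℝ)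
    (hTR1 : 0 < δTR1) (hPS1 : 0 < δPS1) (hSP0 : δSP0 < 0) (hRT0 : -δSP0 < δRT0)
    (a b c d : ℝ)
    (ha : a = δSP0 - δRT0 + δPS1 - δTR1) (hb : b = δRT0 - δSP0)
    (hc : c = -(δPS1 + δSP0)) (hd : d = δSP0)
    (T : ℝ → ℝ → ℝ) (hT : ∀ β x, T β x = β⁻¹ * Real.log (x / (1 - x)))
    (xstar : ℝ → ℝ)
    (hxstar : ∀ β : ℝ, 0 < β →
      xstar β ∈ Ioo (0:ℝ) (1/2) ∧ (a + b) * xstar β + c + d = T β (xstar β) ∧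
      ∀ y ∈ Ioo (0:ℝ) 1, (a + b) * y + c + d = T β y → y = xstar β) :
    StrictAntiOn xstar (Ioi (0:ℝ)) ∧ Tendsto xstar atTop (nhds 0) :=
  prosperity_fixed_point_monotone_general δTR1 δPS1 δRT0 δSP0 hTR1 hPS1 a b c d ha hb hc hd T hT
    xstar hxstar
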